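/- arXiv:math/0409140 — 4 statements merged into one kernel-verified Lean document; each statement's English description precedes it below -/
import Mathlib

section
/- Let V be a vertex algebra and W a V-module. For any n ≥ 1, E_n(W) equals the linear span of the vectors u_{-1-i} w for u ∈ V, i ≥ 1, w ∈ E_{n-i}(W). Furthermore, for n ≥ 1, E_n(W) is linearly spanned by the vectors u^{(1)}_{-k_1-1}⋯u^{(r)}_{-k_r-1} w for r ≥ 1, u^{(1)},…,u^{(r)} ∈ V, w ∈ W, k_1,…,k_r ≥ 1 with k_1+⋯+k_r ≥ n. -/
open scoped DirectSum

noncomputable section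


/-- Integer binomial coefficient `C(m, i)` for `m : ℤ`, `i : ℕ`. -/
def intBinom (m : ℤ) (i : ℕ) : ℤ :=
  (∏ j ∈ Finset.range i, (m - (j : ℤ))) / (i.factorial : ℤ)

/-- A vertex algebra over `ℂ`: a complex vector space `V` with a vacuum vector and a
linear state-field correspondence `Y`, `Y(v,x) = ∑ₙ vₙ x^{-n-1}`, satisfying
truncation, vacuum and creation properties, and Borcherds' commutator and
iterate formulas. -/
structure VertexAlgebra (V : Type*) [AddCommGroup V] [Module ℂ V] where
  /-- the coefficients of vertex operators: `Y u n v = uₙ v`. -/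
  Y : V →ₗ[ℂ] ℤ → Module.End ℂ V
  /-- the vacuum vector `𝟏`. -/
  vac : V
  trunc : ∀ u v : V, ∃ N : ℕ, ∀ n : ℤ, (N : ℤ) ≤ n → Y u n v = 0
  vac_act : ∀ (n : ℤ) (v : V), Y vac n v = if n = -1 then v else 0
  create : ∀ u : V, Y u (-1) vac = u
  create_nonneg : ∀ (u : V) (n : ℤ), 0 ≤ n → Y u n vac = 0
  commutator : ∀ (u v w : V) (m n : ℤ),
    Y u m (Y v n w) - Y v n (Y u m w)
      = ∑ᶠ i : ℕ, intBinom m i • Y (Y u i v) (m + n - i) w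
  iterate : ∀ (u v w : V) (m n : ℤ),
    Y (Y u m v) n w
      = ∑ᶠ i : ℕ, ((-1 : ℤ) ^ i * intBinom m i) •
          (Y u (m - i) (Y v (n + i) w)
            - ((((-1 : ℤˣ) ^ m : ℤˣ) : ℤ) • Y v (m + n - i) (Y u i w)))

/-- A module for a vertex algebra. -/
structure VAModule {V : Type*} [AddCommGroup V] [Module ℂ V] (va : VertexAlgebra V)
    (W : Type*) [AddCommGroup W] [Module ℂ W] where
  /-- the action `act v n w = vₙ w`. -/
  act : V →ₗ[ℂ] ℤ → Module.End ℂ W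
  trunc : ∀ (v : V) (w : W), ∃ N : ℕ, ∀ n : ℤ, (N : ℤ) ≤ n → act v n w = 0
  vac_act : ∀ (n : ℤ) (w : W), act va.vac n w = if n = -1 then w else 0
  commutator : ∀ (u v : V) (w : W) (m n : ℤ),
    act u m (act v n w) - act v n (act u m w)
      = ∑ᶠ i : ℕ, intBinom m i • act (va.Y u i v) (m + n - i) w
  iterate : ∀ (u v : V) (w : W) (m n : ℤ),
    act (va.Y u m v) n w
      = ∑ᶠ i : ℕ, ((-1 : ℤ) ^ i * intBinom m i) •
          (act u (m - i) (act v (n + i) w)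
            - ((((-1 : ℤˣ) ^ m : ℤˣ) : ℤ) • act v (m + n - i) (act u i w)))

variable {V : Type*} [AddCommGroup V] [Module ℂ V]

/-- The adjoint module of a vertex algebra. -/
def VertexAlgebra.adjoint (va : VertexAlgebra V) : VAModule va V where
  act := va.Y
  trunc := va.trunc
  vac_act := va.vac_act
  commutator := va.commutator
  iterate := va.iterate

variable {W : Type*} [AddCommGroup W] [Module ℂ W]

/-- `Efilt M n = E_n(W)`: the subspace of `W` spanned by the vectors
`u⁽¹⁾_{-1-k₁} ⋯ u⁽ʳ⁾_{-1-k_r} w` for `r ≥ 1`, `u⁽ⁱ⁾ ∈ V`, `w ∈ W`, `kᵢ ≥ 0`,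
`k₁ + ⋯ + k_r ≥ n`. -/
def Efilt {va : VertexAlgebra V} (M : VAModule va W) (n : ℤ) : Submodule ℂ W :=
  Submodule.span ℂ {x : W | ∃ (L : List (V × ℕ)) (w : W), L ≠ [] ∧
    n ≤ (L.map fun p => ((p.2 : ℤ))).sum ∧
    x = L.foldr (fun p acc => M.act p.1 (-1 - (p.2 : ℤ)) acc) w}

/-- `Cfilt M n = C_n(W)`: the subspace of `W` spanned by the vectors `v_{-n} w`. -/
def Cfilt {va : VertexAlgebra V} (M : VAModule va W) (n : ℕ) : Submodule ℂ W :=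
  Submodule.span ℂ {x : W | ∃ (v : V) (w : W), x = M.act v (-(n : ℤ)) w}

/-!
The modes `u_{-1-k}` with `k = 0` are the `u_{-1}`. By the commutator formula,
`u_{-1} v_{-1-i} w` differs from `v_{-1-i} u_{-1} w` by a combination of the vectors
`(u_j v)_{-1-(i+1+j)} w`, so leading `u_{-1}`'s can be absorbed until a word of weight at
least `n ≥ 1` starts with a mode `u_{-1-i}`, `i ≥ 1`, applied to an element of `E_{n-i}(W)`.
Strong induction on `n` then removes all modes with `k = 0`.
-/

section Filtration

variable {va : VertexAlgebra V} (M : VAModule va W)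

lemma Efilt_antitone : Antitone (Efilt M) := fun _ _ h =>
  Submodule.span_mono fun _ ⟨L, w, hL, hs, hx⟩ => ⟨L, w, hL, h.trans hs, hx⟩

lemma Efilt_eq_top_of_nonpos {n : ℤ} (hn : n ≤ 0) : Efilt M n = ⊤ :=
  eq_top_iff.mpr fun w _ =>
    Submodule.subset_span ⟨[(va.vac, 0)], w, by simp, by simpa using hn, by simp [M.vac_act]⟩

lemma act_mem_Efilt (u : V) (k : ℕ) {m : ℤ} {x : W} (hx : x ∈ Efilt M m) :
    M.act u (-1 - (k : ℤ)) x ∈ Efilt M (m + k) := by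
  have hle : Efilt M m ≤ (Efilt M (m + k)).comap (M.act u (-1 - (k : ℤ))) := by
    rw [Efilt, Submodule.span_le]
    rintro _ ⟨L, w, hL, hs, rfl⟩
    refine Submodule.subset_span ⟨(u, k) :: L, w, by simp, ?_, rfl⟩
    simp only [List.map_cons, List.sum_cons]
    omega
  exact hle hx

def EfiltStep (n : ℤ) : Submodule ℂ W :=
  Submodule.span ℂ {x : W | ∃ (u : V) (i : ℕ), 1 ≤ i ∧
    ∃ w ∈ Efilt M (n - (i : ℤ)), x = M.act u (-1 - (i : ℤ)) w}

def EfiltPos (n : ℤ) : Submodule ℂ W :=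
  Submodule.span ℂ {x : W | ∃ (L : List (V × ℕ)) (w : W), L ≠ [] ∧
    (∀ p ∈ L, 1 ≤ p.2) ∧ n ≤ (L.map fun p => ((p.2 : ℤ))).sum ∧
    x = L.foldr (fun p acc => M.act p.1 (-1 - (p.2 : ℤ)) acc) w}

lemma act_neg_one_mem_EfiltStep (u : V) {n : ℤ} {y : W} (hy : y ∈ EfiltStep M n) :
    M.act u (-1) y ∈ EfiltStep M n := by
  induction hy using Submodule.span_induction with
  | mem x hx =>
    obtain ⟨v, i, hi, w, hw, rfl⟩ := hx
    have hswap : M.act u (-1) (M.act v (-1 - (i : ℤ)) w)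
        = (∑ᶠ j : ℕ, intBinom (-1) j • M.act (va.Y u j v) (-1 + (-1 - (i : ℤ)) - j) w)
          + M.act v (-1 - (i : ℤ)) (M.act u (-1) w) := by
      rw [← M.commutator]; abel
    rw [hswap]
    refine Submodule.add_mem _ (finsum_induction (· ∈ EfiltStep M n) (Submodule.zero_mem _)
      (fun _ _ => Submodule.add_mem _) fun j => ?_) ?_
    · have hmode : (-1 : ℤ) + (-1 - (i : ℤ)) - j = -1 - ((i + 1 + j : ℕ) : ℤ) := by
        push_cast; ring
      rw [hmode]
      refine Submodule.smul_of_tower_mem _ _ (Submodule.subset_span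
        ⟨va.Y u j v, i + 1 + j, by omega, w, Efilt_antitone M ?_ hw, rfl⟩)
      push_cast; omega
    · have huw : M.act u (-1) w ∈ Efilt M (n - i) := by
        simpa using act_mem_Efilt M u 0 hw
      exact Submodule.subset_span ⟨v, i, hi, _, huw, rfl⟩
  | zero => simp
  | add x y _ _ hx hy => simpa using Submodule.add_mem _ hx hy
  | smul a x _ hx => simpa using Submodule.smul_mem _ a hx

lemma Efilt_le_EfiltStep {n : ℤ} (hn : 1 ≤ n) : Efilt M n ≤ EfiltStep M n := by
  rw [Efilt, Submodule.span_le]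
  rintro _ ⟨L, w, hL, hs, rfl⟩
  induction L with
  | nil => exact absurd rfl hL
  | cons p L ih =>
    obtain ⟨u, k⟩ := p
    simp only [List.map_cons, List.sum_cons] at hs
    rcases Nat.eq_zero_or_pos k with rfl | hk
    · have hL : L ≠ [] := by
        rintro rfl
        simp at hs
        omega
      simpa using act_neg_one_mem_EfiltStep M u (ih hL (by simpa using hs))
    · have htail : L.foldr (fun p acc => M.act p.1 (-1 - (p.2 : ℤ)) acc) w
          ∈ Efilt M (n - k) := by
        rcases eq_or_ne L [] with rfl | hL
        · simp [Efilt_eq_top_of_nonpos M (show n - k ≤ 0 by simp at hs; omega)]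
        · exact Submodule.subset_span ⟨L, w, hL, by omega, rfl⟩
      exact Submodule.subset_span ⟨u, k, hk, _, htail, rfl⟩

lemma EfiltStep_le_Efilt (n : ℤ) : EfiltStep M n ≤ Efilt M n := by
  rw [EfiltStep, Submodule.span_le]
  rintro _ ⟨u, i, -, w, hw, rfl⟩
  simpa using act_mem_Efilt M u i hw

lemma Efilt_eq_EfiltStep {n : ℤ} (hn : 1 ≤ n) : Efilt M n = EfiltStep M n :=
  le_antisymm (Efilt_le_EfiltStep M hn) (EfiltStep_le_Efilt M n)

lemma act_mem_EfiltPos (u : V) {i : ℕ} (hi : 1 ≤ i) {n : ℤ} {x : W}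
    (hx : x ∈ EfiltPos M (n - i)) : M.act u (-1 - (i : ℤ)) x ∈ EfiltPos M n := by
  have hle : EfiltPos M (n - i) ≤ (EfiltPos M n).comap (M.act u (-1 - (i : ℤ))) := by
    rw [EfiltPos, Submodule.span_le]
    rintro _ ⟨L, w, hL, hpos, hs, rfl⟩
    refine Submodule.subset_span ⟨(u, i) :: L, w, by simp, ?_, ?_, rfl⟩
    · simpa [hi] using hpos
    · simp only [List.map_cons, List.sum_cons]
      omega
  exact hle hx

lemma EfiltPos_le_Efilt (n : ℤ) : EfiltPos M n ≤ Efilt M n :=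
  Submodule.span_mono fun _ ⟨L, w, hL, _, hs, hx⟩ => ⟨L, w, hL, hs, hx⟩

lemma Efilt_le_EfiltPos {n : ℤ} (hn : 1 ≤ n) : Efilt M n ≤ EfiltPos M n := by
  induction n using Int.strongRec (m := 1) with
  | lt n hlt => omega
  | ge n _ ih =>
    rw [Efilt_eq_EfiltStep M hn, EfiltStep, Submodule.span_le]
    rintro _ ⟨u, i, hi, w, hw, rfl⟩
    rcases le_or_gt (n - i) 0 with hni | hni
    · exact Submodule.subset_span ⟨[(u, i)], w, by simp, by simpa using hi, by simp; omega, rfl⟩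
    · exact act_mem_EfiltPos M u hi (ih (n - i) (by omega) hni hw)

lemma Efilt_eq_EfiltPos {n : ℤ} (hn : 1 ≤ n) : Efilt M n = EfiltPos M n :=
  le_antisymm (Efilt_le_EfiltPos M hn) (EfiltPos_le_Efilt M n)

end Filtration

/-- **Lemma 2.10 (lgeneral-ele).** For a vertex algebra `V`, a `V`-module `W` and
`n ≥ 1`, `E_n(W)` is the span of the vectors `u_{-1-i} w` for `u ∈ V`, `i ≥ 1`,
`w ∈ E_{n-i}(W)`; furthermore `E_n(W)` is spanned by the vectors
`u⁽¹⁾_{-k₁-1} ⋯ u⁽ʳ⁾_{-k_r-1} w` with `r ≥ 1`, `kᵢ ≥ 1`, `k₁ + ⋯ + k_r ≥ n`. -/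
theorem stmt1 {V : Type*} [AddCommGroup V] [Module ℂ V] {W : Type*} [AddCommGroup W]
    [Module ℂ W] (va : VertexAlgebra V) (M : VAModule va W) (n : ℤ) (hn : 1 ≤ n) :
    Efilt M n = Submodule.span ℂ {x : W | ∃ (u : V) (i : ℕ), 1 ≤ i ∧
        ∃ w ∈ Efilt M (n - (i : ℤ)), x = M.act u (-1 - (i : ℤ)) w} ∧
    Efilt M n = Submodule.span ℂ {x : W | ∃ (L : List (V × ℕ)) (w : W), L ≠ [] ∧
        (∀ p ∈ L, 1 ≤ p.2) ∧ n ≤ (L.map fun p => ((p.2 : ℤ))).sum ∧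
        x = L.foldr (fun p acc => M.act p.1 (-1 - (p.2 : ℤ)) acc) w} :=
  ⟨Efilt_eq_EfiltStep M hn, Efilt_eq_EfiltPos M hn⟩

end
end

section
/- Let V = ⊕_{n≥0} V_(n) be an ℕ-graded vertex algebra. Then E_n(V) ⊆ ⊕_{m≥n} V_(m) for all n ≥ 0, and consequently the decreasing sequence {E_n(V)} is a filtration of V, i.e. ∩_{n≥0} E_n(V) = 0. -/
open scoped DirectSum

noncomputable section


variable {V : Type*} [AddCommGroup V] [Module ℂ V]

variable {W : Type*} [AddCommGroup W] [Module ℂ W]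

/-- The degree-`d` subspace for `d : ℤ` of an `ℕ`-graded space (zero in negative
degrees). -/
def gradeZ {X : Type*} [AddCommGroup X] [Module ℂ X] (g : ℕ → Submodule ℂ X)
    (d : ℤ) : Submodule ℂ X :=
  if 0 ≤ d then g d.toNat else ⊥

/-- **Lemma 2.14 (lNgva).** Let `V = ⊕_{n≥0} V_(n)` be an `ℕ`-graded vertex
algebra. Then `E_n(V) ⊆ ⊕_{m≥n} V_(m)` for all `n ≥ 0`, and consequently the
decreasing sequence `{E_n(V)}` is a filtration: `∩_{n≥0} E_n(V) = 0`. -/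
theorem stmt6 {V : Type*} [AddCommGroup V] [Module ℂ V] (va : VertexAlgebra V)
    (g : ℕ → Submodule ℂ V) (hint : DirectSum.IsInternal g) (hvac : va.vac ∈ g 0)
    (hY : ∀ (k n : ℕ) (m : ℤ) (u v : V), u ∈ g k → v ∈ g n →
      va.Y u m v ∈ gradeZ g ((n : ℤ) + k - m - 1)) :
    (∀ n : ℕ, Efilt va.adjoint (n : ℤ) ≤ ⨆ (m : ℕ) (_ : n ≤ m), g m) ∧
    (⨅ n : ℕ, Efilt va.adjoint (n : ℤ)) = ⊥ := by
  classical
  set S : ℤ → Submodule ℂ V := fun t => ⨆ (m : ℕ) (_ : t ≤ (m : ℤ)), g m with hS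
  have hmemS : ∀ (t : ℤ) (m : ℕ), t ≤ (m : ℤ) → g m ≤ S t := by
    intro t m hm
    exact le_iSup_of_le m (le_iSup_of_le hm le_rfl)
  have hmono : ∀ {s t : ℤ}, t ≤ s → S s ≤ S t := by
    intro s t h
    refine iSup_le fun m => iSup_le fun hm => hmemS t m (le_trans h hm)
  have hSsub : ∀ t : ℤ, S t = ⨆ (m : {m : ℕ // t ≤ (m : ℤ)}), g m := by
    intro t; rw [iSup_subtype]
  have hStop : S 0 = ⊤ := by
    rw [eq_top_iff, ← hint.submodule_iSup_eq_top]
    exact iSup_le fun m => hmemS 0 m (by positivity)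
  -- key lemma
  have key : ∀ (k : ℕ) (u : V) (t : ℤ) (v : V), v ∈ S t →
      va.Y u (-1 - (k : ℤ)) v ∈ S (t + k) := by
    intro k u
    have hu : u ∈ ⨆ i, g i := by rw [hint.submodule_iSup_eq_top]; trivial
    refine Submodule.iSup_induction (motive := fun u : V => ∀ (t : ℤ) (v : V), v ∈ S t →
      va.Y u (-1 - (k : ℤ)) v ∈ S (t + k)) g hu ?_ ?_ ?_
    · intro d u hud t v hv
      rw [hSsub t] at hv
      refine Submodule.iSup_induction (motive := fun v : V =>
        va.Y u (-1 - (k : ℤ)) v ∈ S (t + k)) _ hv ?_ ?_ ?_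
      · rintro ⟨m, hm⟩ v hvm
        have h1 := hY d m (-1 - (k : ℤ)) u v hud hvm
        have h2 : ((m : ℤ) + d - (-1 - (k : ℤ)) - 1) = (m : ℤ) + d + k := by ring
        rw [h2] at h1
        have h3 : (0 : ℤ) ≤ (m : ℤ) + d + k := by positivity
        rw [gradeZ, if_pos h3] at h1
        refine hmemS _ _ ?_ h1
        rw [Int.toNat_of_nonneg h3]
        omega
      · simp only [map_zero]
        exact Submodule.zero_mem _
      · intro x y hx hy
        have : va.Y u (-1 - (k : ℤ)) (x + y)
            = va.Y u (-1 - (k : ℤ)) x + va.Y u (-1 - (k : ℤ)) y := map_add _ _ _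
        rw [this]
        exact Submodule.add_mem _ hx hy
    · intro t v _
      simp only [map_zero, LinearMap.zero_apply, Pi.zero_apply]
      exact Submodule.zero_mem _
    · intro x y hx hy t v hv
      have : va.Y (x + y) (-1 - (k : ℤ)) v
          = va.Y x (-1 - (k : ℤ)) v + va.Y y (-1 - (k : ℤ)) v := by
        rw [map_add]; rfl
      rw [this]
      exact Submodule.add_mem _ (hx t v hv) (hy t v hv)
  -- foldr lemma
  have hfold : ∀ (L : List (V × ℕ)) (w : V),
      L.foldr (fun p acc => va.adjoint.act p.1 (-1 - (p.2 : ℤ)) acc) w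
        ∈ S ((L.map fun p => ((p.2 : ℤ))).sum) := by
    intro L
    induction L with
    | nil => intro w; simp only [List.foldr_nil, List.map_nil, List.sum_nil, hStop,
        Submodule.mem_top]
    | cons p L ih =>
        intro w
        simp only [List.foldr_cons, List.map_cons, List.sum_cons]
        have := key p.2 p.1 _ _ (ih w)
        rw [add_comm] at this
        exact this
  have part1 : ∀ n : ℕ, Efilt va.adjoint (n : ℤ) ≤ ⨆ (m : ℕ) (_ : n ≤ m), g m := by
    intro n
    have hgoal : (⨆ (m : ℕ) (_ : n ≤ m), g m) = S (n : ℤ) := by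
      simp only [hS, Nat.cast_le]
    rw [hgoal, Efilt, Submodule.span_le]
    rintro x ⟨L, w, -, hsum, rfl⟩
    exact hmono hsum (hfold L w)
  refine ⟨part1, ?_⟩
  -- part 2
  rw [eq_bot_iff]
  intro x hx
  simp only [Submodule.mem_iInf] at hx
  set e := LinearEquiv.ofBijective (DirectSum.coeLinearMap g) hint with he
  have hcomp : ∀ m : ℕ, e.symm x m = 0 := by
    intro m
    have hxm : x ∈ ⨆ (m' : {m' : ℕ // m + 1 ≤ m'}), g m' := by
      rw [iSup_subtype]
      exact part1 (m + 1) (hx (m + 1))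
    refine Submodule.iSup_induction (motive := fun x : V => e.symm x m = 0) _ hxm ?_ ?_ ?_
    · rintro ⟨m', hm'⟩ y hy
      exact hint.ofBijective_coeLinearMap_of_mem_ne (by omega : m' ≠ m) hy
    · simp
    · intro a b ha hb
      rw [map_add, DirectSum.add_apply, ha, hb, add_zero]
  have h0 : e.symm x = 0 := DFinsupp.ext fun m => hcomp m
  have := (LinearEquiv.map_eq_zero_iff e.symm).mp h0
  simp [this]

end
end

section
/- Let V be any vertex algebra, let W be a V-module and let k ≥ 2. Then u_{-k} C_k(W) ⊆ C_{k+1}(W) for every u ∈ V. -/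
open scoped DirectSum

noncomputable section


variable {V : Type*} [AddCommGroup V] [Module ℂ V]

variable {W : Type*} [AddCommGroup W] [Module ℂ W]

/-! The vector `v₋₂𝟏` acts by `(v₋₂𝟏)₋ₙ = n v₋ₙ₋₁`, so `C_{n+1}(W) ⊆ C_n(W)` for `n ≥ 1` and every
`vₙ w` with `n ≤ -K` lies in `C_K(W)`; by the commutator formula so does `uₘ vₙ w` once `n ≤ -K` and
`m + n ≤ -K`. The iterate formula expands `(u₋₁v)_{1-2k} w` as
`∑ᵢ (u_{-1-i} v_{1-2k+i} w + v_{-2k-i} uᵢ w)`. For `k ≥ 2` the left side and every summand except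
`u₋ₖ v₋ₖ w` (at `i = k - 1`) lie in `C_{k+1}(W)`, hence so does `u₋ₖ v₋ₖ w`. -/

theorem intBinom_neg_succ (n i : ℕ) :
    intBinom (-((n + 1 : ℕ) : ℤ)) i = (-1) ^ i * ((n + i).choose i : ℤ) := by
  have hprod : ∏ j ∈ Finset.range i, (-((n + 1 : ℕ) : ℤ) - j)
      = (-1) ^ i * ((n + 1).ascFactorial i : ℤ) := by
    rw [Nat.ascFactorial_eq_prod_range, ← Finset.card_range i, ← Finset.prod_const,
      Finset.card_range, Nat.cast_prod, ← Finset.prod_mul_distrib]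
    exact Finset.prod_congr rfl fun j _ => by push_cast; ring
  rw [intBinom, hprod, Nat.ascFactorial_eq_factorial_mul_choose, Nat.cast_mul, mul_left_comm]
  exact Int.mul_ediv_cancel_left _ (by exact_mod_cast i.factorial_ne_zero)

theorem intBinom_neg_one (i : ℕ) : intBinom (-1) i = (-1) ^ i := by
  simpa using intBinom_neg_succ 0 i

theorem intBinom_neg_two (i : ℕ) : intBinom (-2) i = (-1) ^ i * (i + 1) := by
  simpa [add_comm 1 i] using intBinom_neg_succ 1 i

theorem Submodule.finsum_mem {R M : Type*} {ι : Sort*} [Semiring R] [AddCommMonoid M]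
    [Module R M] (S : Submodule R M) {f : ι → M} (hf : ∀ i, f i ∈ S) : ∑ᶠ i, f i ∈ S :=
  finsum_induction (· ∈ S) S.zero_mem (fun _ _ => S.add_mem) hf

theorem Submodule.mem_of_finsum_mem {R M ι : Type*} [Ring R] [AddCommGroup M] [Module R M]
    {S : Submodule R M} {f : ι → M} (hf : (Function.support f).Finite) (a : ι)
    (hsum : ∑ᶠ i, f i ∈ S) (h : ∀ i ≠ a, f i ∈ S) : f a ∈ S := by
  rw [← add_finsum_cond_ne a hf] at hsum
  exact (S.add_mem_iff_left (S.finsum_mem fun i => S.finsum_mem fun hi => h i hi)).mp hsum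

section

variable {va : VertexAlgebra V} (M : VAModule va W)

theorem VAModule.act_vac_of_ne {n : ℤ} (hn : n ≠ -1) (w : W) : M.act va.vac n w = 0 := by
  rw [M.vac_act, if_neg hn]

theorem VAModule.act_Y_neg_two_vac (v : V) (w : W) (m : ℕ) :
    M.act (va.Y v (-2) va.vac) (-1 - m) w = ((m : ℤ) + 1) • M.act v (-2 - m) w := by
  rw [M.iterate, finsum_eq_single _ m]
  · rw [M.vac_act, if_pos (sub_add_cancel _ _), M.act_vac_of_ne (by omega), intBinom_neg_two,
      smul_zero, sub_zero, ← mul_assoc, ← pow_add, Even.neg_one_pow ⟨m, rfl⟩, one_mul]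
  · intro i hi
    rw [M.act_vac_of_ne (by omega), M.act_vac_of_ne (by omega), map_zero, smul_zero, sub_zero,
      smul_zero]

theorem VAModule.act_Y_neg_one (u v : V) (w : W) (n : ℤ) :
    M.act (va.Y u (-1) v) n w
      = ∑ᶠ i : ℕ, (M.act u (-1 - i) (M.act v (n + i) w) + M.act v (n - 1 - i) (M.act u i w)) := by
  rw [M.iterate]
  refine finsum_congr fun i => ?_
  rw [intBinom_neg_one, ← pow_add, Even.neg_one_pow ⟨i, rfl⟩, one_smul,
    show (((-1 : ℤˣ) ^ (-1 : ℤ) : ℤˣ) : ℤ) = -1 by decide, neg_one_smul, sub_neg_eq_add,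
    neg_add_eq_sub]

theorem Cfilt_succ_le (m : ℕ) : Cfilt M (m + 2) ≤ Cfilt M (m + 1) := by
  refine Submodule.span_le.mpr ?_
  rintro _ ⟨v, w, rfl⟩
  have hm : ((m : ℂ) + 1) ≠ 0 := by exact_mod_cast m.succ_ne_zero
  have hv : M.act v (-((m + 2 : ℕ) : ℤ)) w
      = ((m : ℂ) + 1)⁻¹ • M.act (va.Y v (-2) va.vac) (-((m + 1 : ℕ) : ℤ)) w := by
    rw [show -((m + 2 : ℕ) : ℤ) = -2 - m by omega, show -((m + 1 : ℕ) : ℤ) = -1 - m by omega,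
      M.act_Y_neg_two_vac, ← Int.cast_smul_eq_zsmul ℂ, smul_smul]
    push_cast
    rw [inv_mul_cancel₀ hm, one_smul]
  rw [SetLike.mem_coe, hv]
  exact Submodule.smul_mem _ _ (Submodule.subset_span ⟨_, w, rfl⟩)

theorem Cfilt_le_of_le {m n : ℕ} (hm : 1 ≤ m) (hmn : m ≤ n) : Cfilt M n ≤ Cfilt M m := by
  induction n, hmn using Nat.le_induction with
  | base => exact le_rfl
  | succ n hn ih =>
    obtain ⟨n, rfl⟩ := Nat.exists_eq_add_of_le' (hm.trans hn)
    exact (Cfilt_succ_le M n).trans ih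

theorem VAModule.act_mem_Cfilt {K : ℕ} (hK : 1 ≤ K) (v : V) (w : W) {n : ℤ}
    (hn : n ≤ -K) : M.act v n w ∈ Cfilt M K := by
  refine Cfilt_le_of_le M hK (show K ≤ n.natAbs by omega) (Submodule.subset_span ⟨v, w, ?_⟩)
  rw [show -(n.natAbs : ℤ) = n by omega]

theorem VAModule.act_act_mem_Cfilt {K : ℕ} (hK : 1 ≤ K) (u v : V) (w : W) {m n : ℤ}
    (hn : n ≤ -K) (hmn : m + n ≤ -K) : M.act u m (M.act v n w) ∈ Cfilt M K := by
  rw [← sub_add_cancel (M.act u m (M.act v n w)) (M.act v n (M.act u m w)), M.commutator]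
  refine Submodule.add_mem _ (Submodule.finsum_mem _ fun i => ?_) (M.act_mem_Cfilt hK _ _ hn)
  exact Submodule.smul_of_tower_mem _ _ (M.act_mem_Cfilt hK _ _ (by omega))

theorem VAModule.act_neg_act_neg_mem_Cfilt_succ {k : ℕ} (hk : 2 ≤ k) (u v : V) (w : W) :
    M.act u (-k) (M.act v (-k) w) ∈ Cfilt M (k + 1) := by
  have hk1 : 1 ≤ k + 1 := by omega
  set f : ℕ → W := fun i =>
    M.act u (-1 - i) (M.act v (1 - 2 * k + i) w) + M.act v (1 - 2 * k - 1 - i) (M.act u i w)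
  obtain ⟨N₁, hN₁⟩ := M.trunc v w
  obtain ⟨N₂, hN₂⟩ := M.trunc u w
  have hf : (Function.support f).Finite := by
    refine (Set.finite_Iio (N₁ + N₂ + 2 * k)).subset fun i hi => ?_
    by_contra h
    simp only [Set.mem_Iio, not_lt] at h
    exact hi (by simp [f, hN₁ (1 - 2 * k + i) (by omega), hN₂ i (by omega)])
  have hsum : ∑ᶠ i, f i ∈ Cfilt M (k + 1) := by
    rw [← M.act_Y_neg_one]
    exact M.act_mem_Cfilt hk1 _ _ (by omega)
  have hterm := Submodule.mem_of_finsum_mem hf (k - 1) hsum fun i hi => by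
    refine Submodule.add_mem _ ?_ (M.act_mem_Cfilt hk1 _ _ (by omega))
    rcases lt_or_gt_of_ne hi with hi | hi
    · exact M.act_act_mem_Cfilt hk1 _ _ _ (by omega) (by omega)
    · exact M.act_mem_Cfilt hk1 _ _ (by omega)
  rw [Submodule.add_mem_iff_left _ (M.act_mem_Cfilt hk1 _ _ (by omega))] at hterm
  rwa [show -1 - ((k - 1 : ℕ) : ℤ) = -k by omega,
    show 1 - 2 * k + ((k - 1 : ℕ) : ℤ) = -k by omega] at hterm

end

/-- **Lemma 3.3 (lmorecn).** Let `V` be any vertex algebra, `W` a `V`-module and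
`k ≥ 2`. Then `u_{-k} C_k(W) ⊆ C_{k+1}(W)` for every `u ∈ V`. -/
theorem stmt7 {V : Type*} [AddCommGroup V] [Module ℂ V] {W : Type*} [AddCommGroup W]
    [Module ℂ W] (va : VertexAlgebra V) (M : VAModule va W) (k : ℕ) (hk : 2 ≤ k)
    (u : V) : ∀ w ∈ Cfilt M k, M.act u (-(k : ℤ)) w ∈ Cfilt M (k + 1) := by
  intro w hw
  induction hw using Submodule.span_induction with
  | mem x hx =>
    obtain ⟨v, w, rfl⟩ := hx
    exact M.act_neg_act_neg_mem_Cfilt_succ hk u v w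
  | zero => simp
  | add x y _ _ hx hy => simpa using Submodule.add_mem _ hx hy
  | smul c x _ hx => simpa using Submodule.smul_mem _ c hx

end
end

section
/- Let A = ⊕_{n≥0} A_(n) be an ℕ-graded unital commutative associative algebra with a derivation ∂ of degree 1, such that (∂A)A = A_+, where A_+ = ⊕_{n≥1} A_(n). Let S be a generating subspace of the algebra A_(0). Then A is linearly spanned by the vectors ∂^{n_1}(a_1)⋯∂^{n_r}(a_r) for r ≥ 0, n_1 ≥ n_2 ≥ ⋯ ≥ n_r ≥ 0, a_1,…,a_r ∈ S (i.e. S generates A as a differential algebra); in particular A_(0) generates A as a differential algebra. Furthermore, A is linearly spanned by the vectors ∂^{n_1}(a_1)⋯∂^{n_r}(a_r) for r ≥ 1, n_1 > n_2 > ⋯ > n_r ≥ 0, a_1,…,a_r ∈ A_(0). -/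
noncomputable section

lemma iterLeibniz {A : Type*} [CommRing A] [Algebra ℂ A] (D : Derivation ℂ A A) :
    ∀ (m : ℕ) (a b : A),
    ((D.toLinearMap : Module.End ℂ A) ^ m) (a * b)
      = ∑ i ∈ Finset.range (m+1), (m.choose i : ℂ) •
          (((D.toLinearMap) ^ i) a *
           ((D.toLinearMap) ^ (m - i)) b) := by
  intro m
  induction m with
  | zero => intro a b; simp
  | succ m ih =>
    intro a b
    set E : Module.End ℂ A := (D.toLinearMap : Module.End ℂ A) with hE
    set g : ℕ → A := fun j => (E ^ j) a * (E ^ (m + 1 - j)) b with hg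
    have step : (E ^ (m+1)) (a*b) = E ((E ^ m) (a*b)) := by
      rw [pow_succ', Module.End.mul_apply]
    have hD : ∀ x, E x = D x := fun x => rfl
    rw [step, ih, map_sum]
    have term : ∀ i ∈ Finset.range (m+1),
        E ((m.choose i : ℂ) • ((E ^ i) a * (E ^ (m - i)) b))
        = (m.choose i : ℂ) • (g (i+1) + g i) := by
      intro i hi
      rw [Finset.mem_range] at hi
      have hmi : m + 1 - (i+1) = m - i := by omega
      have hmi2 : m + 1 - i = (m - i) + 1 := by omega
      rw [map_smul]
      congr 1
      rw [hD, Derivation.leibniz]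
      simp only [smul_eq_mul, hg, hmi, hmi2]
      have e1 : (E ^ (i+1)) a = D ((E^i) a) := by
        rw [pow_succ', Module.End.mul_apply]; exact hD _
      have e2 : (E ^ ((m-i)+1)) b = D ((E^(m-i)) b) := by
        rw [pow_succ', Module.End.mul_apply]; exact hD _
      rw [e1, e2]; ring
    rw [Finset.sum_congr rfl term]
    simp only [smul_add, Finset.sum_add_distrib]
    have rhs1 : ∑ j ∈ Finset.range (m+2), ((m+1).choose j : ℂ) • g j
        = (∑ i ∈ Finset.range (m+1), ((m+1).choose (i+1) : ℂ) • g (i+1))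
          + ((m+1).choose 0 : ℂ) • g 0 :=
      Finset.sum_range_succ' (fun j => ((m+1).choose j : ℂ) • g j) (m+1)
    have pascal : ∀ i, (((m+1).choose (i+1) : ℂ)) = (m.choose i : ℂ) + (m.choose (i+1) : ℂ) := by
      intro i
      rw [Nat.choose_succ_succ]
      push_cast
      ring
    have rhs2 : ∑ j ∈ Finset.range (m+2), ((m+1).choose j : ℂ) • g j
        = (∑ i ∈ Finset.range (m+1), (m.choose i : ℂ) • g (i+1))
          + ((∑ i ∈ Finset.range (m+1), (m.choose (i+1) : ℂ) • g (i+1))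
             + (m.choose 0 : ℂ) • g 0) := by
      rw [rhs1]
      simp only [pascal, add_smul, Finset.sum_add_distrib]
      have : ((m+1).choose 0 : ℂ) = (m.choose 0 : ℂ) := by norm_num
      rw [this]
      ring
    have rhs3 : (∑ i ∈ Finset.range (m+1), (m.choose (i+1) : ℂ) • g (i+1))
          + (m.choose 0 : ℂ) • g 0
        = ∑ j ∈ Finset.range (m+1), (m.choose j : ℂ) • g j := by
      rw [Finset.sum_range_succ (fun i => (m.choose (i+1) : ℂ) • g (i+1)) m]
      simp only [Nat.choose_succ_self, Nat.cast_zero, zero_smul, add_zero]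
      rw [← Finset.sum_range_succ' (fun j => (m.choose j : ℂ) • g j) m]
    rw [rhs2, rhs3]

/-- sum of squares is at most the square of the sum. -/
lemma sqsum_le : ∀ l : List ℕ, (l.map (fun n => n * n)).sum ≤ l.sum * l.sum := by
  intro l
  induction l with
  | nil => simp
  | cons a t ih =>
    simp only [List.map_cons, List.sum_cons]
    nlinarith [Nat.zero_le ((t.map (fun n => n * n)).sum), Nat.zero_le a, Nat.zero_le t.sum]

lemma sq_pair {i k : ℕ} (h : i ≤ 2 * k) (hne : i ≠ k) :
    k * k + k * k < i * i + (2 * k - i) * (2 * k - i) := by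
  rcases lt_or_gt_of_ne hne with hlt | hgt
  · obtain ⟨d, hd, rfl⟩ : ∃ d, 0 < d ∧ k = i + d := ⟨k - i, by omega, by omega⟩
    have e : 2 * (i + d) - i = i + 2 * d := by omega
    rw [e]; nlinarith
  · obtain ⟨d, hd, hi⟩ : ∃ d, 0 < d ∧ i = k + d := ⟨i - k, by omega, by omega⟩
    have hdk : d ≤ k := by omega
    subst hi
    obtain ⟨e, rfl⟩ : ∃ e, k = d + e := ⟨k - d, by omega⟩
    have e1 : 2 * (d + e) - (d + e + d) = e := by omega
    rw [e1]; nlinarith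

lemma arith_main {s r rnew qold qnew : ℕ} (hqold : qold ≤ s * s) (hr : 1 ≤ r)
    (h : rnew + 1 = r ∨ (rnew = r ∧ qold < qnew)) :
    (s * s + 1) * rnew - qnew < (s * s + 1) * r - qold := by
  rcases h with h | ⟨rfl, hlt⟩
  · have e : (s * s + 1) * r = (s * s + 1) * rnew + (s * s + 1) := by rw [← h]; ring
    set Y := s * s with hY
    set X := (Y + 1) * rnew with hX
    omega
  · set Y := s * s with hY
    have hX : Y + 1 ≤ (Y + 1) * rnew := by
      calc Y + 1 = (Y + 1) * 1 := by ring
      _ ≤ (Y + 1) * rnew := Nat.mul_le_mul_left _ hr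
    set X := (Y + 1) * rnew with hXdef
    omega

/-- find an adjacent equal pair in a weakly sorted list of pairs, or conclude strict. -/
lemma find_pair {A : Type*} : ∀ L : List (ℕ × A), (L.map Prod.fst).Pairwise (· ≥ ·) →
    (L.map Prod.fst).Pairwise (· > ·) ∨
      ∃ (L₁ : List (ℕ × A)) (p q : ℕ × A) (L₂ : List (ℕ × A)),
        L = L₁ ++ p :: q :: L₂ ∧ p.1 = q.1 := by
  intro L
  induction L with
  | nil => intro _; exact Or.inl (by simp)
  | cons p t ih =>
    intro h
    rcases t with _ | ⟨q, t'⟩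
    · exact Or.inl (by simp)
    · by_cases hpq : p.1 = q.1
      · exact Or.inr ⟨[], p, q, t', by simp, hpq⟩
      · simp only [List.map_cons] at h
        have h' := (List.pairwise_cons.mp h)
        rcases ih (by simpa using h'.2) with hs | ⟨L₁, p', q', L₂, heq, hpq'⟩
        · left
          simp only [List.map_cons] at hs ⊢
          refine List.pairwise_cons.mpr ⟨?_, hs⟩
          intro b hb
          have h2 := List.pairwise_cons.mp h'.2
          have hpgq : p.1 > q.1 :=
            lt_of_le_of_ne (h'.1 q.1 (by simp)) (by omega)
          simp only [List.mem_cons] at hb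
          rcases hb with rfl | hb
          · exact hpgq
          · have := h2.1 b (by simpa using hb)
            omega
        · exact Or.inr ⟨p :: L₁, p', q', L₂, by simp [heq], hpq'⟩

namespace Stmt14Aux

variable {A : Type*} [CommRing A] [Algebra ℂ A]

/-- measure for the straightening induction -/
def meas (L : List (ℕ × A)) : ℕ :=
  ((L.map Prod.fst).sum * (L.map Prod.fst).sum + 1) * L.length
    - (L.map (fun p => p.1 * p.1)).sum

lemma meas_perm {L L' : List (ℕ × A)} (h : L.Perm L') : meas L = meas L' := by
  unfold meas
  rw [(h.map Prod.fst).sum_eq, (h.map (fun p => p.1 * p.1)).sum_eq, h.length_eq]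

lemma sumsq_le (L : List (ℕ × A)) :
    (L.map (fun p => p.1 * p.1)).sum ≤ (L.map Prod.fst).sum * (L.map Prod.fst).sum := by
  have := sqsum_le (L.map Prod.fst)
  simpa [List.map_map, Function.comp_def] using this

lemma meas_lt1 (L₁ L₂ : List (ℕ × A)) (p q : ℕ × A) (c : A) (h : p.1 = q.1) :
    meas (L₁ ++ (p.1 + q.1, c) :: L₂) < meas (L₁ ++ p :: q :: L₂) := by
  unfold meas
  simp only [List.map_append, List.sum_append, List.length_append, List.map_cons,
    List.sum_cons, List.length_cons]
  have hsum : (L₁.map Prod.fst).sum + (p.1 + q.1 + (L₂.map Prod.fst).sum)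
      = (L₁.map Prod.fst).sum + (p.1 + (q.1 + (L₂.map Prod.fst).sum)) := by omega
  rw [hsum]
  apply arith_main
  · calc (L₁.map (fun p => p.1 * p.1)).sum + (p.1 * p.1 + (q.1 * q.1
        + (L₂.map (fun p => p.1 * p.1)).sum))
        = ((L₁ ++ p :: q :: L₂).map (fun p => p.1 * p.1)).sum := by
          simp [List.map_append, List.sum_append]
      _ ≤ _ := by
          have := sumsq_le (L₁ ++ p :: q :: L₂)
          simpa [List.map_append, List.sum_append] using this
  · omega
  · left; omega

lemma meas_lt2 (L₁ L₂ : List (ℕ × A)) (p q : ℕ × A) (u v : A) (i : ℕ) (h : p.1 = q.1)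
    (hi : i ≤ p.1 + q.1) (hne : i ≠ p.1) :
    meas (L₁ ++ (i, u) :: (p.1 + q.1 - i, v) :: L₂) < meas (L₁ ++ p :: q :: L₂) := by
  unfold meas
  simp only [List.map_append, List.sum_append, List.length_append, List.map_cons,
    List.sum_cons, List.length_cons]
  have hsum : (L₁.map Prod.fst).sum + (i + (p.1 + q.1 - i + (L₂.map Prod.fst).sum))
      = (L₁.map Prod.fst).sum + (p.1 + (q.1 + (L₂.map Prod.fst).sum)) := by omega
  rw [hsum]
  apply arith_main
  · calc (L₁.map (fun p => p.1 * p.1)).sum + (p.1 * p.1 + (q.1 * q.1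
        + (L₂.map (fun p => p.1 * p.1)).sum))
        = ((L₁ ++ p :: q :: L₂).map (fun p => p.1 * p.1)).sum := by
          simp [List.map_append, List.sum_append]
      _ ≤ _ := by
          have := sumsq_le (L₁ ++ p :: q :: L₂)
          simpa [List.map_append, List.sum_append] using this
  · omega
  · right
    constructor
    · omega
    · have key : p.1 * p.1 + q.1 * q.1 < i * i + (p.1 + q.1 - i) * (p.1 + q.1 - i) := by
        have hq : q.1 = p.1 := h.symm
        rw [hq] at hi ⊢
        have h2 : p.1 + p.1 = 2 * p.1 := by omega
        rw [h2] at hi ⊢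
        exact sq_pair hi hne
      omega

/-- the sorting function -/
def sortL (L : List (ℕ × A)) : List (ℕ × A) :=
  L.mergeSort (fun p q => decide (q.1 ≤ p.1))

lemma sortL_perm (L : List (ℕ × A)) : (sortL L).Perm L := List.mergeSort_perm L _

lemma sortL_sorted (L : List (ℕ × A)) : ((sortL L).map Prod.fst).Pairwise (· ≥ ·) := by
  have h := List.pairwise_mergeSort (le := fun p q : ℕ × A => decide (q.1 ≤ p.1))
    (by intro a b c h1 h2; simp at *; omega)
    (by intro a b; simp [Bool.or_eq_true]; omega) L
  rw [List.pairwise_map]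
  exact h.imp (by intro a b hab; simpa using hab)

end Stmt14Aux

open Stmt14Aux in
/-- Part 1 as an auxiliary lemma. -/
lemma part1 {A : Type*} [CommRing A] [Algebra ℂ A] (𝒜 : ℕ → Submodule ℂ A)
    [GradedAlgebra 𝒜] (D : Derivation ℂ A A)
    (hdeg : ∀ n : ℕ, ∀ a ∈ 𝒜 n, D a ∈ 𝒜 (n + 1))
    (hplus : Submodule.span ℂ {x : A | ∃ a b : A, x = D a * b}
      = ⨆ (n : ℕ) (_ : 1 ≤ n), 𝒜 n)
    (S : Submodule ℂ A)
    (hgen : (𝒜 0 : Set A) ⊆ Algebra.adjoin ℂ (S : Set A)) :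
    Submodule.span ℂ {x : A | ∃ L : List (ℕ × A),
      (L.map Prod.fst).Pairwise (· ≥ ·) ∧ (∀ p ∈ L, p.2 ∈ S) ∧
      x = (L.map fun p => ((D.toLinearMap : Module.End ℂ A) ^ p.1) p.2).prod} = ⊤ := by
  classical
  set f : ℕ × A → A := fun p => ((D.toLinearMap : Module.End ℂ A) ^ p.1) p.2 with hf
  set gset : Set A := {x : A | ∃ L : List (ℕ × A),
      (L.map Prod.fst).Pairwise (· ≥ ·) ∧ (∀ p ∈ L, p.2 ∈ S) ∧
      x = (L.map f).prod} with hgset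
  set M : Submodule ℂ A := Submodule.span ℂ gset with hM
  have hone : (1 : A) ∈ M := Submodule.subset_span ⟨[], by simp, by simp, by simp⟩
  have hsingle : ∀ (n : ℕ) (s : A), s ∈ S → f (n, s) ∈ M := by
    intro n s hs
    exact Submodule.subset_span ⟨[(n, s)], by simp, by simpa using hs, by simp⟩
  have hmulgen : ∀ x ∈ gset, ∀ y ∈ gset, x * y ∈ gset := by
    rintro x ⟨L1, h1s, h1e, rfl⟩ y ⟨L2, h2s, h2e, rfl⟩
    refine ⟨sortL (L1 ++ L2), sortL_sorted _, ?_, ?_⟩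
    · intro p hp
      have := (sortL_perm (L1 ++ L2)).mem_iff.mp hp
      rcases List.mem_append.mp this with h | h
      · exact h1e p h
      · exact h2e p h
    · rw [((sortL_perm (L1 ++ L2)).map f).prod_eq]
      simp [List.map_append, List.prod_append]
  have hmul : ∀ x ∈ M, ∀ y ∈ M, x * y ∈ M := by
    have hle : M * M ≤ M := by
      rw [hM, Submodule.span_mul_span]
      apply Submodule.span_le.mpr
      rintro z ⟨x, hx, y, hy, rfl⟩
      exact Submodule.subset_span (hmulgen x hx y hy)
    intro x hx y hy
    exact hle (Submodule.mul_mem_mul hx hy)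
  have hprodmem : ∀ L : List (ℕ × A), (∀ p ∈ L, p.2 ∈ S) →
      (L.map f).prod ∈ M ∧ D ((L.map f).prod) ∈ M := by
    intro L
    induction L with
    | nil =>
      intro _
      constructor
      · simpa using hone
      · simpa using (zero_mem M)
    | cons p t ih =>
      intro hent
      have hp2 : p.2 ∈ S := hent p (by simp)
      have ih' := ih (fun q hq => hent q (by simp [hq]))
      have hfp : f p ∈ M := hsingle p.1 p.2 hp2
      have hDfp : D (f p) = f (p.1 + 1, p.2) := by
        show D (((D.toLinearMap : Module.End ℂ A) ^ p.1) p.2) = _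
        show _ = ((D.toLinearMap : Module.End ℂ A) ^ (p.1 + 1)) p.2
        rw [pow_succ', Module.End.mul_apply]
        rfl
      constructor
      · rw [List.map_cons, List.prod_cons]
        exact hmul _ hfp _ ih'.1
      · rw [List.map_cons, List.prod_cons, Derivation.leibniz]
        simp only [smul_eq_mul]
        refine add_mem ?_ ?_
        · exact hmul _ hfp _ ih'.2
        · rw [hDfp]
          exact hmul _ ih'.1 _ (hsingle (p.1 + 1) p.2 hp2)
  have hD : ∀ x ∈ M, D x ∈ M := by
    intro x hx
    refine Submodule.span_induction ?_ ?_ ?_ ?_ hx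
    · rintro y ⟨L, _, hent, rfl⟩
      exact (hprodmem L hent).2
    · simpa using (zero_mem M)
    · intro a b _ _ ha hb
      rw [map_add]; exact add_mem ha hb
    · intro c a _ ha
      rw [Derivation.map_smul]; exact Submodule.smul_mem _ _ ha
  have hA0 : (𝒜 0 : Set A) ⊆ (M : Set A) := by
    have hT : Algebra.adjoin ℂ (S : Set A) ≤
        Submodule.toSubalgebra M hone (fun x y hx hy => hmul x hx y hy) := by
      apply Algebra.adjoin_le
      intro s hs
      have : f (0, s) ∈ M := hsingle 0 s hs
      simpa [hf] using this
    intro x hx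
    exact hT (hgen hx)
  have hdegmem : ∀ n, ∀ x ∈ 𝒜 n, x ∈ M := by
    intro n
    induction n using Nat.strong_induction_on with
    | _ n IH =>
      intro x hx
      rcases Nat.eq_zero_or_pos n with rfl | hn
      · exact hA0 hx
      · have hx' : x ∈ Submodule.span ℂ {x : A | ∃ a b : A, x = D a * b} := by
          rw [hplus]
          exact le_iSup₂ (f := fun (n : ℕ) (_ : 1 ≤ n) => 𝒜 n) n hn hx
        set π : A →ₗ[ℂ] A := (𝒜 n).subtype ∘ₗ
          (DirectSum.component ℂ ℕ (fun i => ↥(𝒜 i)) n) ∘ₗ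
          (DirectSum.decomposeLinearEquiv 𝒜).toLinearMap with hπdef
        have hπ : ∀ y : A, π y = ((DirectSum.decompose 𝒜 y) n : A) := fun y => rfl
        have hker : Submodule.span ℂ {x : A | ∃ a b : A, x = D a * b} ≤ M.comap π := by
          rw [Submodule.span_le]
          rintro _ ⟨a, b, rfl⟩
          simp only [Set.mem_setOf_eq, SetLike.mem_coe, Submodule.mem_comap]
          have ea := (DirectSum.sum_support_decompose 𝒜 a).symm
          have eb := (DirectSum.sum_support_decompose 𝒜 b).symm
          have e1 : D a * b = ∑ k ∈ (DirectSum.decompose 𝒜 a).support,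
              ∑ l ∈ (DirectSum.decompose 𝒜 b).support,
                D ((DirectSum.decompose 𝒜 a) k : A) * ((DirectSum.decompose 𝒜 b) l : A) := by
            conv_lhs => rw [ea, eb]
            rw [map_sum, Finset.sum_mul]
            exact Finset.sum_congr rfl fun k _ => by rw [Finset.mul_sum]
          rw [e1, map_sum]
          refine Submodule.sum_mem M fun k _ => ?_
          rw [map_sum]
          refine Submodule.sum_mem M fun l _ => ?_
          have hak : ((DirectSum.decompose 𝒜 a) k : A) ∈ 𝒜 k := SetLike.coe_mem _
          have hbl : ((DirectSum.decompose 𝒜 b) l : A) ∈ 𝒜 l := SetLike.coe_mem _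
          have hterm : D ((DirectSum.decompose 𝒜 a) k : A) * ((DirectSum.decompose 𝒜 b) l : A)
              ∈ 𝒜 (k + 1 + l) := SetLike.mul_mem_graded (hdeg k _ hak) hbl
          by_cases hcase : k + 1 + l = n
          · rw [hπ, DirectSum.decompose_of_mem_same 𝒜 (hcase ▸ hterm)]
            exact hmul _ (hD _ (IH k (by omega) _ hak)) _ (IH l (by omega) _ hbl)
          · rw [hπ, DirectSum.decompose_of_mem_ne 𝒜 hterm hcase]
            exact zero_mem M
        have hmem := hker hx'
        rw [Submodule.mem_comap, hπ, DirectSum.decompose_of_mem_same 𝒜 hx] at hmem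
        exact hmem
  rw [eq_top_iff]
  intro x _
  rw [← DirectSum.sum_support_decompose 𝒜 x]
  exact Submodule.sum_mem M fun i _ => hdegmem i _ (SetLike.coe_mem _)


open Stmt14Aux in
lemma part2 {A : Type*} [CommRing A] [Algebra ℂ A] (𝒜 : ℕ → Submodule ℂ A)
    [GradedAlgebra 𝒜] (D : Derivation ℂ A A)
    (hdeg : ∀ n : ℕ, ∀ a ∈ 𝒜 n, D a ∈ 𝒜 (n + 1))
    (hplus : Submodule.span ℂ {x : A | ∃ a b : A, x = D a * b}
      = ⨆ (n : ℕ) (_ : 1 ≤ n), 𝒜 n) :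
    Submodule.span ℂ {x : A | ∃ L : List (ℕ × A), L ≠ [] ∧
      (L.map Prod.fst).Pairwise (· > ·) ∧ (∀ p ∈ L, p.2 ∈ 𝒜 0) ∧
      x = (L.map fun p => ((D.toLinearMap : Module.End ℂ A) ^ p.1) p.2).prod} = ⊤ := by
  classical
  set f : ℕ × A → A := fun p => ((D.toLinearMap : Module.End ℂ A) ^ p.1) p.2 with hf
  set M2 : Submodule ℂ A := Submodule.span ℂ {x : A | ∃ L : List (ℕ × A), L ≠ [] ∧
      (L.map Prod.fst).Pairwise (· > ·) ∧ (∀ p ∈ L, p.2 ∈ 𝒜 0) ∧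
      x = (L.map f).prod} with hM2
  have straight : ∀ N : ℕ, ∀ L : List (ℕ × A), meas L < N →
      (L.map Prod.fst).Pairwise (· ≥ ·) → (∀ p ∈ L, p.2 ∈ 𝒜 0) → (L.map f).prod ∈ M2 := by
    intro N
    induction N with
    | zero => intro L h _ _; exact absurd h (Nat.not_lt_zero _)
    | succ N ihN =>
      intro L hm hs he
      rcases find_pair L hs with hstrict | ⟨L₁, p, q, L₂, rfl, hpq⟩
      · rcases heL : L with _ | ⟨p, t⟩
        · simp only [List.map_nil, List.prod_nil]
          refine Submodule.subset_span ⟨[(0, 1)], by simp, by simp, ?_, ?_⟩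
          · intro r hr
            rcases List.mem_singleton.mp hr with rfl
            exact SetLike.one_mem_graded 𝒜
          · simp [hf]
        · subst heL
          exact Submodule.subset_span ⟨p :: t, by simp, hstrict, he, rfl⟩
      · set m : ℕ := p.1 + q.1 with hmdef
        have hkm : p.1 ∈ Finset.range (m + 1) := by
          rw [Finset.mem_range]; omega
        have hc0 : (m.choose p.1 : ℂ) ≠ 0 :=
          Nat.cast_ne_zero.mpr (Nat.choose_pos (by omega)).ne'
        have hmq : m - p.1 = q.1 := by omega
        have key := iterLeibniz D m p.2 q.2
        have hsplit : ((D.toLinearMap : Module.End ℂ A) ^ m) (p.2 * q.2)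
            = (m.choose p.1 : ℂ) • (f p * f q)
              + ∑ i ∈ (Finset.range (m + 1)).erase p.1,
                (m.choose i : ℂ) •
                  (((D.toLinearMap : Module.End ℂ A) ^ i) p.2 *
                   ((D.toLinearMap : Module.End ℂ A) ^ (m - i)) q.2) := by
          rw [key, ← Finset.add_sum_erase _ _ hkm, hmq]
        have hfq : f p * f q = (m.choose p.1 : ℂ)⁻¹ •
            (((D.toLinearMap : Module.End ℂ A) ^ m) (p.2 * q.2)
              - ∑ i ∈ (Finset.range (m + 1)).erase p.1,
                (m.choose i : ℂ) •
                  (((D.toLinearMap : Module.End ℂ A) ^ i) p.2 *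
                   ((D.toLinearMap : Module.End ℂ A) ^ (m - i)) q.2)) := by
          rw [hsplit, add_sub_cancel_right, inv_smul_smul₀ hc0]
        have hrec : ∀ L' : List (ℕ × A), meas L' < meas (L₁ ++ p :: q :: L₂) →
            (∀ r ∈ L', r.2 ∈ 𝒜 0) → (L'.map f).prod ∈ M2 := by
          intro L' hm' he'
          rw [← ((sortL_perm L').map f).prod_eq]
          exact ihN (sortL L') (by rw [meas_perm (sortL_perm L')]; omega)
            (sortL_sorted L') (fun r hr => he' r ((sortL_perm L').mem_iff.mp hr))
        have hentp : p.2 ∈ 𝒜 0 := he p (by simp)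
        have hentq : q.2 ∈ 𝒜 0 := he q (by simp)
        have hW1 : (L₁.map f).prod *
            (((D.toLinearMap : Module.End ℂ A) ^ m) (p.2 * q.2) * (L₂.map f).prod) ∈ M2 := by
          have e : (L₁.map f).prod *
              (((D.toLinearMap : Module.End ℂ A) ^ m) (p.2 * q.2) * (L₂.map f).prod)
              = ((L₁ ++ (m, p.2 * q.2) :: L₂).map f).prod := by
            simp only [List.map_append, List.prod_append, List.map_cons, List.prod_cons]
            rfl
          rw [e]
          refine hrec _ (meas_lt1 L₁ L₂ p q _ hpq) ?_
          intro r hr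
          rcases List.mem_append.mp hr with h | h
          · exact he r (by simp [h])
          · rcases List.mem_cons.mp h with rfl | h
            · simpa using SetLike.mul_mem_graded hentp hentq
            · exact he r (by simp [h])
        have hW2 : ∀ i ∈ (Finset.range (m + 1)).erase p.1,
            (L₁.map f).prod *
              (((D.toLinearMap : Module.End ℂ A) ^ i) p.2 *
                ((D.toLinearMap : Module.End ℂ A) ^ (m - i)) q.2 * (L₂.map f).prod) ∈ M2 := by
          intro i hi
          have hi1 : i ≤ m := by
            have := Finset.mem_range.mp (Finset.mem_of_mem_erase hi); omega
          have hine : i ≠ p.1 := Finset.ne_of_mem_erase hi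
          have e : (L₁.map f).prod *
              (((D.toLinearMap : Module.End ℂ A) ^ i) p.2 *
                ((D.toLinearMap : Module.End ℂ A) ^ (m - i)) q.2 * (L₂.map f).prod)
              = ((L₁ ++ (i, p.2) :: (m - i, q.2) :: L₂).map f).prod := by
            simp only [List.map_append, List.prod_append, List.map_cons, List.prod_cons]
            show _ = (L₁.map f).prod *
              (((D.toLinearMap : Module.End ℂ A) ^ i) p.2 *
                (((D.toLinearMap : Module.End ℂ A) ^ (m - i)) q.2 * (L₂.map f).prod))
            ring
          rw [e]
          refine hrec _ (meas_lt2 L₁ L₂ p q _ _ i hpq hi1 hine) ?_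
          intro r hr
          rcases List.mem_append.mp hr with h | h
          · exact he r (by simp [h])
          · rcases List.mem_cons.mp h with rfl | h
            · exact hentp
            · rcases List.mem_cons.mp h with rfl | h
              · exact hentq
              · exact he r (by simp [h])
        have hexp : ((L₁ ++ p :: q :: L₂).map f).prod
            = (m.choose p.1 : ℂ)⁻¹ • ((L₁.map f).prod *
                (((D.toLinearMap : Module.End ℂ A) ^ m) (p.2 * q.2) * (L₂.map f).prod)
              - ∑ i ∈ (Finset.range (m + 1)).erase p.1,
                  (m.choose i : ℂ) • ((L₁.map f).prod *
                    (((D.toLinearMap : Module.End ℂ A) ^ i) p.2 *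
                      ((D.toLinearMap : Module.End ℂ A) ^ (m - i)) q.2 * (L₂.map f).prod))) := by
          have e0 : ((L₁ ++ p :: q :: L₂).map f).prod
              = (L₁.map f).prod * ((f p * f q) * (L₂.map f).prod) := by
            simp only [List.map_append, List.prod_append, List.map_cons, List.prod_cons]
            ring
          rw [e0, hfq, smul_mul_assoc, mul_smul_comm]
          congr 1
          rw [sub_mul, mul_sub, Finset.sum_mul, Finset.mul_sum]
          congr 1
          refine Finset.sum_congr rfl fun i _ => ?_
          rw [smul_mul_assoc, mul_smul_comm, mul_assoc]
        rw [hexp]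
        exact Submodule.smul_mem _ _ (sub_mem hW1 (Submodule.sum_mem _ fun i hi =>
          Submodule.smul_mem _ _ (hW2 i hi)))
  rw [eq_top_iff]
  have h1 := part1 𝒜 D hdeg hplus (𝒜 0) (Algebra.subset_adjoin)
  rw [← h1]
  apply Submodule.span_le.mpr
  rintro x ⟨L, hs, he, rfl⟩
  exact straight (meas L + 1) L (by omega) hs he


/-- **Lemma 4.1 (ldiff).** Let `A = ⊕_{n≥0} A_(n)` be an `ℕ`-graded unital
commutative associative algebra with a degree-one derivation `∂` such that
`(∂A)A = A₊ = ⊕_{n≥1} A_(n)`, and let `S` be a generating subspace of the algebra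
`A_(0)`. Then `A` is spanned by the products `∂^{n₁}(a₁) ⋯ ∂^{n_r}(a_r)` with
`r ≥ 0`, `n₁ ≥ ⋯ ≥ n_r ≥ 0`, `aᵢ ∈ S` (so `S` generates `A` as a differential
algebra); furthermore `A` is spanned by such products with `r ≥ 1`,
`n₁ > ⋯ > n_r ≥ 0` and `aᵢ ∈ A_(0)`. -/
theorem stmt14 {A : Type*} [CommRing A] [Algebra ℂ A] (𝒜 : ℕ → Submodule ℂ A)
    [GradedAlgebra 𝒜] (D : Derivation ℂ A A)
    (hdeg : ∀ n : ℕ, ∀ a ∈ 𝒜 n, D a ∈ 𝒜 (n + 1))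
    (hplus : Submodule.span ℂ {x : A | ∃ a b : A, x = D a * b}
      = ⨆ (n : ℕ) (_ : 1 ≤ n), 𝒜 n)
    (S : Submodule ℂ A) (hS : S ≤ 𝒜 0)
    (hgen : (𝒜 0 : Set A) ⊆ Algebra.adjoin ℂ (S : Set A)) :
    (Submodule.span ℂ {x : A | ∃ L : List (ℕ × A),
      (L.map Prod.fst).Pairwise (· ≥ ·) ∧ (∀ p ∈ L, p.2 ∈ S) ∧
      x = (L.map fun p => ((D.toLinearMap : Module.End ℂ A) ^ p.1) p.2).prod} = ⊤) ∧
    (Submodule.span ℂ {x : A | ∃ L : List (ℕ × A), L ≠ [] ∧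
      (L.map Prod.fst).Pairwise (· > ·) ∧ (∀ p ∈ L, p.2 ∈ 𝒜 0) ∧
      x = (L.map fun p => ((D.toLinearMap : Module.End ℂ A) ^ p.1) p.2).prod} = ⊤) := by
  exact ⟨part1 𝒜 D hdeg hplus S hgen, part2 𝒜 D hdeg hplus⟩

end
end
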